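/- Let 𝔤 be a 3-dimensional real Lie algebra which is not unimodular (i.e., there is x ∈ 𝔤 with tr(ad_x) ≠ 0), let 𝔤₀ := {x ∈ 𝔤 : tr(ad_x) = 0} be its unimodular kernel, and let B be a nondegenerate symmetric bilinear form on 𝔤 whose restriction to 𝔤₀ is nondegenerate (𝔤₀ ∩ 𝔤₀^⊥ = 0). If (J₊,J₋,X₊,X₋,H,F) is a B₃-Kähler datum on (𝔤,B), then H = 0, F = 0, and there exist a B-orthogonal basis (w₁,w₂,w₃) of 𝔤, real numbers δ ≠ 0 and signs ε, ε' ∈ {±1} such that [w₁,w₂] = w₂, [w₁,w₃] = [w₂,w₃] = 0 (so 𝔤 ≅ ℝ ⊕ 𝔰𝔬𝔩₂), B(w₁,w₁) = ε/δ², B(w₂,w₂) = ε', B(w₃,w₃) = 1, X₋ = w₃ and X₊ = ±w₃. -/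

import Mathlib

/-!
The ∇X₋ condition says that `ad X₋` is `B`-skew and `H(x, X₋, z) = B([x, z], X₋)`, and `J₋` leaves
no nonzero `B`-isotropic vector in `X₋^⊥`. Taking `u ∈ 𝔤₀ ∩ X₋^⊥` normalised and `e ⊥ u, X₋`, the
traces of `ad` in the orthogonal frame `(e, u, X₋)` and the Jacobi identity show that `X₋` is
central and `[e, u] = a u + b X₋` with `a = tr ad e ≠ 0`. The symmetric part of the ∇X₊ condition
then forces `X₊ = ±X₋` and `F(e, J₊e) = 0`; since `J₊` rotates the plane `⟨e, u⟩`, this kills `F`.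
With `F = 0` the ∇X₊ and ∇X₋ conditions together give `H(·, X₋, ·) = 0`, hence `b = 0` and `H = 0`.
The basis is `(a⁻¹e, u, X₋)`; writing `J₊e = α u`, `B(e, e) = α² B(u, u)` gives `δ = a / α`.
-/

open Module

namespace AlternatingMap

variable {R M N : Type*} [CommRing R] [AddCommGroup M] [Module R M] [AddCommGroup N] [Module R N]

theorem map_vec2_swap (F : M [⋀^Fin 2]→ₗ[R] N) (x y : M) : F ![y, x] = -F ![x, y] := by
  convert F.map_swap ![x, y] (i := 0) (j := 1) (by decide) using 2
  ext i; fin_cases i <;> rfl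

theorem map_vec3_swap01 (H : M [⋀^Fin 3]→ₗ[R] N) (x y z : M) : H ![y, x, z] = -H ![x, y, z] := by
  convert H.map_swap ![x, y, z] (i := 0) (j := 1) (by decide) using 2
  ext i; fin_cases i <;> rfl

theorem map_vec3_swap02 (H : M [⋀^Fin 3]→ₗ[R] N) (x y z : M) : H ![z, y, x] = -H ![x, y, z] := by
  convert H.map_swap ![x, y, z] (i := 0) (j := 2) (by decide) using 2
  ext i; fin_cases i <;> rfl

theorem map_vec3_swap12 (H : M [⋀^Fin 3]→ₗ[R] N) (x y z : M) : H ![x, z, y] = -H ![x, y, z] := by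
  convert H.map_swap ![x, y, z] (i := 1) (j := 2) (by decide) using 2
  ext i; fin_cases i <;> rfl

end AlternatingMap

section Koszul

variable {R L : Type*} [CommRing R] [LieRing L] [LieAlgebra R L]

/-- The right side of the Koszul formula: `2 B (∇_x y) z = koszul B x y z`. -/
def koszul (B : LinearMap.BilinForm R L) (x y z : L) : R :=
  B ⁅x, y⁆ z - B ⁅y, z⁆ x + B ⁅z, x⁆ y

theorem koszul_add_koszul_swap (B : LinearMap.BilinForm R L) (x y z : L) :
    koszul B x y z + koszul B z y x = 2 * (B ⁅x, y⁆ z + B ⁅z, y⁆ x) := by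
  simp only [koszul, ← lie_skew y x, ← lie_skew y z, ← lie_skew x z, map_neg,
    LinearMap.neg_apply]
  ring

theorem koszul_sub_koszul_swap (B : LinearMap.BilinForm R L) (x y z : L) :
    koszul B x y z - koszul B z y x = 2 * B ⁅z, x⁆ y := by
  simp only [koszul, ← lie_skew y x, ← lie_skew y z, ← lie_skew x z, map_neg,
    LinearMap.neg_apply]
  ring

end Koszul

structure IsOrthoTriple {K V : Type*} [Field K] [AddCommGroup V] [Module K V]
    (B : LinearMap.BilinForm K V) (e u X : V) : Prop where
  eu : B e u = 0
  eX : B e X = 0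
  uX : B u X = 0
  ee : B e e ≠ 0
  uu : B u u ≠ 0
  XX : B X X ≠ 0

namespace IsOrthoTriple

variable {K V : Type*} [Field K] [AddCommGroup V] [Module K V]
  {B : LinearMap.BilinForm K V} {e u X : V}

theorem exists_basis [FiniteDimensional K V] (h : IsOrthoTriple B e u X) (hB : ∀ x y, B x y = B y x)
    (hdim : finrank K V = 3) : ∃ w : Basis (Fin 3) K V, ⇑w = ![e, u, X] := by
  have hli : LinearIndependent K ![e, u, X] := by
    refine LinearMap.BilinForm.linearIndependent_of_iIsOrtho (B := B) (fun i j hij => ?_)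
      fun i => ?_
    · fin_cases i <;> fin_cases j <;>
        simp_all [Function.onFun, h.eu, h.eX, h.uX, hB u e, hB X e, hB X u]
    · fin_cases i
      exacts [h.ee, h.uu, h.XX]
  have hcard : Fintype.card (Fin 3) = finrank K V := by simp [hdim]
  exact ⟨basisOfLinearIndependentOfCardEqFinrank hli hcard,
    coe_basisOfLinearIndependentOfCardEqFinrank hli hcard⟩

theorem repr_eq (h : IsOrthoTriple B e u X) (hB : ∀ x y, B x y = B y x)
    {w : Basis (Fin 3) K V} (hw : ⇑w = ![e, u, X]) (y : V) (i : Fin 3) :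
    w.repr y i = B y (w i) / B (w i) (w i) := by
  have hne : B (w i) (w i) ≠ 0 := by fin_cases i <;> simp [hw, h.ee, h.uu, h.XX]
  rw [eq_div_iff hne]
  conv_rhs => rw [← w.sum_repr y]
  fin_cases i <;> simp [Fin.sum_univ_three, hw, h.eu, h.eX, h.uX, hB u e, hB X e, hB X u]

theorem eq_coords [FiniteDimensional K V] (h : IsOrthoTriple B e u X) (hB : ∀ x y, B x y = B y x)
    (hdim : finrank K V = 3) (y : V) :
    y = (B y e / B e e) • e + (B y u / B u u) • u + (B y X / B X X) • X := by
  obtain ⟨w, hw⟩ := h.exists_basis hB hdim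
  conv_lhs => rw [← w.sum_repr y]
  simp [Fin.sum_univ_three, h.repr_eq hB hw, hw]

theorem trace_eq [FiniteDimensional K V] (h : IsOrthoTriple B e u X) (hB : ∀ x y, B x y = B y x)
    (hdim : finrank K V = 3) (f : V →ₗ[K] V) :
    LinearMap.trace K V f = B (f e) e / B e e + B (f u) u / B u u + B (f X) X / B X X := by
  obtain ⟨w, hw⟩ := h.exists_basis hB hdim
  rw [LinearMap.trace_eq_matrix_trace K w, Matrix.trace_fin_three]
  simp [LinearMap.toMatrix_apply, h.repr_eq hB hw, hw]

theorem two_form_eq_first [FiniteDimensional K V] (h : IsOrthoTriple B e u X)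
    (hB : ∀ x y, B x y = B y x) (hdim : finrank K V = 3) (F : V [⋀^Fin 2]→ₗ[K] K) (x y : V) :
    F ![x, y] = B x e / B e e * F ![e, y] + B x u / B u u * F ![u, y] +
      B x X / B X X * F ![X, y] := by
  conv_lhs => rw [h.eq_coords hB hdim x]
  simp only [F.map_vecCons_add, F.map_vecCons_smul, smul_eq_mul]

theorem two_form_eq [FiniteDimensional K V] (h : IsOrthoTriple B e u X)
    (hB : ∀ x y, B x y = B y x) (hdim : finrank K V = 3) (F : V [⋀^Fin 2]→ₗ[K] K)
    (hFX : ∀ y, F ![X, y] = 0) (x y : V) :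
    F ![x, y] = (B x e * B y u - B x u * B y e) / (B e e * B u u) * F ![e, u] := by
  have hsecond : ∀ z, F ![z, y] = -(B y e / B e e * F ![e, z] + B y u / B u u * F ![u, z] +
      B y X / B X X * F ![X, z]) := fun z => by
    rw [F.map_vec2_swap, h.two_form_eq_first hB hdim]
  rw [h.two_form_eq_first hB hdim, hsecond e, hsecond u, hFX, hFX, hFX,
    F.map_vec2_swap u e]
  simp only [AlternatingMap.map_eq_zero_of_eq F ![e, e] (i := 0) (j := 1) rfl (by decide),
    AlternatingMap.map_eq_zero_of_eq F ![u, u] (i := 0) (j := 1) rfl (by decide)]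
  have := h.ee; have := h.uu
  field_simp
  ring

theorem two_form_eq_zero [FiniteDimensional K V] (h : IsOrthoTriple B e u X)
    (hB : ∀ x y, B x y = B y x) (hdim : finrank K V = 3) {F : V [⋀^Fin 2]→ₗ[K] K}
    (hFX : ∀ y, F ![X, y] = 0) {α : K} (hα : α ≠ 0) (hF : F ![e, α • u] = 0) : F = 0 := by
  rw [h.two_form_eq hB hdim F hFX] at hF
  simp [h.eu, h.ee, h.uu, hα] at hF
  ext v
  rw [show v = ![v 0, v 1] from funext fun i => by fin_cases i <;> rfl,
    h.two_form_eq hB hdim F hFX, hF, mul_zero, AlternatingMap.zero_apply]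

theorem alternating_eq_zero [FiniteDimensional K V] (h : IsOrthoTriple B e u X)
    (hB : ∀ x y, B x y = B y x) (hdim : finrank K V = 3) {H : V [⋀^Fin 3]→ₗ[K] K}
    (hH : H ![e, u, X] = 0) : H = 0 := by
  obtain ⟨w, hw⟩ := h.exists_basis hB hdim
  rw [H.eq_smul_basis_det w, hw, hH, zero_smul]

end IsOrthoTriple

theorem exists_ne_zero_apply_eq_zero_and {K V : Type*} [Field K] [AddCommGroup V] [Module K V]
    [FiniteDimensional K V] (hdim : finrank K V = 3) (f g : V →ₗ[K] K) :
    ∃ v, v ≠ 0 ∧ f v = 0 ∧ g v = 0 := by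
  obtain ⟨v, hv, hv0⟩ := (Submodule.ne_bot_iff _).mp
    (LinearMap.ker_ne_bot_of_finrank_lt (f := f.prod g) (by simp [hdim]))
  exact ⟨v, hv0, congrArg Prod.fst hv, congrArg Prod.snd hv⟩

theorem linearIndependent_of_apply_apply_eq_neg {K V : Type*} [Field K] [LinearOrder K]
    [IsStrictOrderedRing K] [AddCommGroup V] [Module K V] {B : LinearMap.BilinForm K V}
    {J : V →ₗ[K] V} {v X : V} (hv : v ≠ 0) (hJJv : J (J v) = -v) (hX : B X X = 1)
    (hvX : B v X = 0) (hJvX : B (J v) X = 0) : LinearIndependent K ![v, J v, X] := by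
  rw [Fintype.linearIndependent_iff]
  intro c hc
  simp only [Fin.sum_univ_three, Matrix.cons_val_zero, Matrix.cons_val_one,
    Matrix.cons_val_two, Matrix.head_cons, Matrix.tail_cons] at hc
  have h2 : c 2 = 0 := by
    simpa [hvX, hJvX, hX] using congrArg (fun y => B y X) hc
  rw [h2, zero_smul, add_zero] at hc
  have hJc : c 0 • J v - c 1 • v = 0 := by
    simpa [hJJv, sub_eq_add_neg] using congrArg J hc
  have hsq : (c 0 ^ 2 + c 1 ^ 2) • v = 0 := by
    rw [show (c 0 ^ 2 + c 1 ^ 2) • v = c 0 • (c 0 • v + c 1 • J v) - c 1 • (c 0 • J v - c 1 • v)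
      by module, hc, hJc, smul_zero, smul_zero, sub_zero]
  have hsum := (smul_eq_zero.mp hsq).resolve_right hv
  have h0 : c 0 = 0 := by nlinarith [sq_nonneg (c 0), sq_nonneg (c 1)]
  have h1 : c 1 = 0 := by nlinarith [sq_nonneg (c 0), sq_nonneg (c 1)]
  intro i; fin_cases i <;> assumption

theorem apply_self_ne_zero_of_skew_of_sq_eq {K V : Type*} [Field K] [LinearOrder K]
    [IsStrictOrderedRing K] [AddCommGroup V] [Module K V] [FiniteDimensional K V]
    (hdim : finrank K V = 3) {B : LinearMap.BilinForm K V} (hB : ∀ x y, B x y = B y x)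
    (hBnd : ∀ x, (∀ y, B x y = 0) → x = 0) {J : V →ₗ[K] V} {X : V}
    (hJskew : ∀ x y, B (J x) y = - B x (J y)) (hX : B X X = 1) (hJX : J X = 0)
    (hJ2 : ∀ x, J (J x) = -x + B x X • X) {v : V} (hv : v ≠ 0) (hvX : B v X = 0) :
    B v v ≠ 0 := by
  intro hvv
  have hJvX : B (J v) X = 0 := by rw [hJskew, hJX, map_zero, neg_zero]
  have hvJv : B v (J v) = 0 := by linarith [hJskew v v, hB v (J v)]
  have hJJv : J (J v) = -v := by rw [hJ2, hvX, zero_smul, add_zero]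
  have hli := linearIndependent_of_apply_apply_eq_neg hv hJJv hX hvX hJvX
  have hcard : Fintype.card (Fin 3) = finrank K V := by simp [hdim]
  set w := basisOfLinearIndependentOfCardEqFinrank hli hcard
  have hw : ⇑w = ![v, J v, X] := coe_basisOfLinearIndependentOfCardEqFinrank hli hcard
  have hBv : B v = 0 := w.ext fun i => by fin_cases i <;> simp [hw, hvv, hvJv, hvX]
  exact hv (hBnd v fun y => by rw [hBv, LinearMap.zero_apply])

theorem exists_smul_apply_smul_eq_one_or {V : Type*} [AddCommGroup V] [Module ℝ V]
    (B : LinearMap.BilinForm ℝ V) {v : V} (hv : B v v ≠ 0) :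
    ∃ t : ℝ, B (t • v) (t • v) = 1 ∨ B (t • v) (t • v) = -1 := by
  refine ⟨(√|B v v|)⁻¹, ?_⟩
  have hsq : √|B v v| ^ 2 = |B v v| := Real.sq_sqrt (abs_nonneg _)
  simp only [map_smul, LinearMap.smul_apply, smul_eq_mul, ← mul_assoc, ← sq, inv_pow, hsq]
  rcases abs_cases (B v v) with ⟨h, -⟩ | ⟨h, -⟩ <;> rw [h] <;> field_simp <;> simp

theorem exists_isOrthoTriple {V : Type*} [AddCommGroup V] [Module ℝ V] [FiniteDimensional ℝ V]
    (hdim : finrank ℝ V = 3) {B : LinearMap.BilinForm ℝ V} {X : V} (hX : B X X ≠ 0)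
    (hdef : ∀ v, v ≠ 0 → B v X = 0 → B v v ≠ 0) (τ : V →ₗ[ℝ] ℝ) :
    ∃ e u, IsOrthoTriple B e u X ∧ τ u = 0 ∧ (B u u = 1 ∨ B u u = -1) := by
  obtain ⟨u₀, hu₀, hτu₀, hu₀X⟩ := exists_ne_zero_apply_eq_zero_and hdim τ (B.flip X)
  obtain ⟨t, hu⟩ := exists_smul_apply_smul_eq_one_or B (hdef u₀ hu₀ hu₀X)
  have huX : B (t • u₀) X = 0 := by simpa using Or.inr hu₀X
  obtain ⟨e, he, heu, heX⟩ := exists_ne_zero_apply_eq_zero_and hdim (B.flip (t • u₀)) (B.flip X)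
  refine ⟨e, t • u₀, ⟨heu, heX, huX, hdef e he heX, ?_, hX⟩, by simp [hτu₀], hu⟩
  rcases hu with hu | hu <;> rw [hu] <;> norm_num

theorem exists_eq_sign_smul {V : Type*} [AddCommGroup V] [Module ℝ V]
    {B : LinearMap.BilinForm ℝ V} {X Y : V} (hX : B X X = 1) (hY : B Y Y = 1)
    (hYX : Y = (B Y X / B X X) • X) : ∃ r : ℝ, (r = 1 ∨ r = -1) ∧ Y = r • X := by
  refine ⟨B Y X, ?_, by rwa [hX, div_one] at hYX⟩
  rw [← mul_self_eq_one_iff, ← hY]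
  conv_rhs => rw [hYX]
  simp [hX]

section LieAlgebra

variable {L : Type*} [LieRing L] [LieAlgebra ℝ L] {B : LinearMap.BilinForm ℝ L}

theorem koszul_eq_neg_of_nabla_eq {N : L → L → L}
    (hK : ∀ x y z, 2 * B (N x y) z = koszul B x y z) {H : L [⋀^Fin 3]→ₗ[ℝ] ℝ}
    {Hs : L → L → L} (hHs : ∀ x y z, B (Hs x y) z = H ![x, y, z]) {Y : L}
    (hN : ∀ x, N x Y = (-(1 / 2 : ℝ)) • Hs x Y) (x z : L) :
    koszul B x Y z = -H ![x, Y, z] := by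
  rw [← hK, hN, map_smul, LinearMap.smul_apply, hHs, smul_eq_mul]
  ring

theorem koszul_eq_of_nabla_eq_sub {N : L → L → L}
    (hK : ∀ x y z, 2 * B (N x y) z = koszul B x y z) {H : L [⋀^Fin 3]→ₗ[ℝ] ℝ}
    {Hs : L → L → L} (hHs : ∀ x y z, B (Hs x y) z = H ![x, y, z]) {F : L [⋀^Fin 2]→ₗ[ℝ] ℝ}
    {Fs : L → L} (hFs : ∀ x y, B (Fs x) y = F ![x, y]) {J : L →ₗ[ℝ] L}
    (hJ : ∀ x y, B (J x) y = - B x (J y)) {Y : L}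
    (hN : ∀ x, N x Y = (-(1 / 2 : ℝ)) • Hs Y x - J (Fs x)) (x z : L) :
    koszul B x Y z = -H ![Y, x, z] + 2 * F ![x, J z] := by
  rw [← hK, hN, map_sub, map_smul, LinearMap.sub_apply, LinearMap.smul_apply, hHs, hJ, hFs,
    smul_eq_mul]
  ring

theorem lie_skew_of_koszul_eq_neg {H : L [⋀^Fin 3]→ₗ[ℝ] ℝ} {Y : L}
    (hY : ∀ x z, koszul B x Y z = -H ![x, Y, z]) (x z : L) :
    B ⁅x, Y⁆ z + B ⁅z, Y⁆ x = 0 := by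
  have := koszul_add_koszul_swap B x Y z
  rw [hY, hY, H.map_vec3_swap02 x Y z] at this
  linarith

theorem apply_eq_of_koszul_eq_neg {H : L [⋀^Fin 3]→ₗ[ℝ] ℝ} {Y : L}
    (hY : ∀ x z, koszul B x Y z = -H ![x, Y, z]) (x z : L) :
    H ![x, Y, z] = B ⁅x, z⁆ Y := by
  have := koszul_sub_koszul_swap B x Y z
  rw [hY, hY, H.map_vec3_swap02 x Y z, ← lie_skew, map_neg, LinearMap.neg_apply] at this
  linarith

theorem lie_add_lie_of_koszul_eq {H : L [⋀^Fin 3]→ₗ[ℝ] ℝ} {F : L [⋀^Fin 2]→ₗ[ℝ] ℝ}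
    {J : L →ₗ[ℝ] L} {Y : L} (hY : ∀ x z, koszul B x Y z = -H ![Y, x, z] + 2 * F ![x, J z])
    (x z : L) : B ⁅x, Y⁆ z + B ⁅z, Y⁆ x = F ![x, J z] + F ![z, J x] := by
  have := koszul_add_koszul_swap B x Y z
  rw [hY, hY, H.map_vec3_swap12 Y x z] at this
  linarith

theorem apply_eq_zero_of_koszul_eq {H : L [⋀^Fin 3]→ₗ[ℝ] ℝ} {X Y : L} {r : ℝ} (hr : r ≠ 0)
    (hYX : Y = r • X) (hX : ∀ x z, koszul B x X z = -H ![x, X, z])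
    (hY : ∀ x z, koszul B x Y z = -H ![Y, x, z]) (x z : L) : H ![x, X, z] = 0 := by
  have hkoszul : koszul B x Y z = r * koszul B x X z := by
    simp only [koszul, hYX, lie_smul, smul_lie, map_smul, LinearMap.smul_apply, smul_eq_mul]
    ring
  rw [hY, hX, hYX, H.map_vecCons_smul, smul_eq_mul, H.map_vec3_swap01] at hkoszul
  have : r * H ![x, X, z] = 0 := by linarith
  exact (mul_eq_zero.mp this).resolve_left hr

variable {e u X : L}

theorem apply_lie_self_eq_zero_of_skew (hskew : ∀ x z, B ⁅x, X⁆ z + B ⁅z, X⁆ x = 0) (x : L) :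
    B ⁅x, X⁆ x = 0 := by
  linarith [hskew x x]

theorem apply_lie_eq_zero_of_skew (hskew : ∀ x z, B ⁅x, X⁆ z + B ⁅z, X⁆ x = 0) (x : L) :
    B ⁅x, X⁆ X = 0 := by
  simpa using hskew x X

theorem exists_lie_eq_of_skew [FiniteDimensional ℝ L] (hdim : finrank ℝ L = 3)
    (hB : ∀ x y, B x y = B y x) (h : IsOrthoTriple B e u X)
    (hskew : ∀ x z, B ⁅x, X⁆ z + B ⁅z, X⁆ x = 0)
    (hu : LinearMap.trace ℝ L (LieAlgebra.ad ℝ L u) = 0)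
    (hnonuni : ∃ x : L, LinearMap.trace ℝ L (LieAlgebra.ad ℝ L x) ≠ 0) :
    ∃ a b : ℝ, a ≠ 0 ∧ ⁅e, u⁆ = a • u + b • X := by
  have htr : ∀ x, LinearMap.trace ℝ L (LieAlgebra.ad ℝ L x) =
      B ⁅x, e⁆ e / B e e + B ⁅x, u⁆ u / B u u + B ⁅x, X⁆ X / B X X := fun x =>
    h.trace_eq hB hdim _
  have hXX := apply_lie_eq_zero_of_skew hskew
  have hself := apply_lie_self_eq_zero_of_skew hskew
  have heue : B ⁅e, u⁆ e = 0 := by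
    have : B ⁅u, e⁆ e / B e e = 0 := by simpa [hu, hXX] using (htr u).symm
    rwa [div_eq_zero_iff, or_iff_left h.ee, ← lie_skew, map_neg, LinearMap.neg_apply,
      neg_eq_zero] at this
  have htrX : LinearMap.trace ℝ L (LieAlgebra.ad ℝ L X) = 0 := by
    rw [htr, ← lie_skew, map_neg, LinearMap.neg_apply, hself, ← lie_skew X u, map_neg,
      LinearMap.neg_apply, hself, lie_self]
    simp
  refine ⟨B ⁅e, u⁆ u / B u u, B ⁅e, u⁆ X / B X X, fun ha => ?_, ?_⟩
  · obtain ⟨x, hx⟩ := hnonuni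
    have htre : LinearMap.trace ℝ L (LieAlgebra.ad ℝ L e) = 0 := by
      rw [htr, lie_self, ha, hXX]
      simp
    apply hx
    rw [h.eq_coords hB hdim x]
    simp [htre, hu, htrX]
  · conv_lhs => rw [h.eq_coords hB hdim ⁅e, u⁆]
    simp [heue]

theorem lie_eq_zero_of_skew [FiniteDimensional ℝ L] (hdim : finrank ℝ L = 3)
    (hB : ∀ x y, B x y = B y x) (h : IsOrthoTriple B e u X)
    (hskew : ∀ x z, B ⁅x, X⁆ z + B ⁅z, X⁆ x = 0) {a b : ℝ} (ha : a ≠ 0)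
    (hbr : ⁅e, u⁆ = a • u + b • X) (x : L) : ⁅x, X⁆ = 0 := by
  have hXX := apply_lie_eq_zero_of_skew hskew
  have hself := apply_lie_self_eq_zero_of_skew hskew
  have heX : ⁅e, X⁆ = (B ⁅e, X⁆ u / B u u) • u := by
    conv_lhs => rw [h.eq_coords hB hdim ⁅e, X⁆]
    simp [hXX, hself]
  have huX : ⁅u, X⁆ = (B ⁅u, X⁆ e / B e e) • e := by
    conv_lhs => rw [h.eq_coords hB hdim ⁅u, X⁆]
    simp [hXX, hself]
  -- In `⁅⁅e, u⁆, X⁆ = ⁅e, ⁅u, X⁆⁆ - ⁅u, ⁅e, X⁆⁆` the right side vanishes, the left is `a • ⁅u, X⁆`.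
  have huX0 : ⁅u, X⁆ = 0 := by
    have hjac := lie_lie e u X
    rw [hbr, heX, huX] at hjac
    simp only [add_lie, smul_lie, lie_self, smul_zero, add_zero, lie_smul, sub_zero] at hjac
    rw [huX, smul_smul, smul_eq_zero] at hjac
    have he : e ≠ 0 := fun he => h.ee (by simp [he])
    rw [huX, (mul_eq_zero.mp (hjac.resolve_right he)).resolve_left ha, zero_smul]
  have heX0 : ⁅e, X⁆ = 0 := by
    have := hskew e u
    rw [huX0, map_zero, LinearMap.zero_apply, add_zero] at this
    rw [heX, this, zero_div, zero_smul]
  rw [h.eq_coords hB hdim x]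
  simp [add_lie, smul_lie, heX0, huX0]

theorem eq_smul_of_koszul_eq [FiniteDimensional ℝ L] (hdim : finrank ℝ L = 3)
    (hB : ∀ x y, B x y = B y x) (h : IsOrthoTriple B e u X) (hcent : ∀ x : L, ⁅x, X⁆ = 0)
    {a b : ℝ} (ha : a ≠ 0) (hbr : ⁅e, u⁆ = a • u + b • X)
    {H : L [⋀^Fin 3]→ₗ[ℝ] ℝ} {F : L [⋀^Fin 2]→ₗ[ℝ] ℝ} (hFX : ∀ y, F ![X, y] = 0)
    {J : L →ₗ[ℝ] L} (hJ : ∀ x y, B (J x) y = - B x (J y)) {Y : L}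
    (hY : ∀ x z, koszul B x Y z = -H ![Y, x, z] + 2 * F ![x, J z]) :
    Y = (B Y X / B X X) • X ∧ F ![e, J e] = 0 := by
  have hYc := h.eq_coords hB hdim Y
  have heY : ⁅e, Y⁆ = (B Y u / B u u) • ⁅e, u⁆ := by
    conv_lhs => rw [hYc]
    simp [hcent]
  have huY : ⁅u, Y⁆ = -((B Y e / B e e) • ⁅e, u⁆) := by
    conv_lhs => rw [hYc]
    simp only [lie_add, lie_smul, lie_self, hcent, smul_zero, add_zero]
    rw [← lie_skew e u, smul_neg, neg_neg]
  have hJself : ∀ x, B (J x) x = 0 := fun x => by linarith [hJ x x, hB x (J x)]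
  have hF := h.two_form_eq hB hdim F hFX
  have hsym := lie_add_lie_of_koszul_eq hY
  have hee := h.ee; have huu := h.uu
  have hue : B u e = 0 := (hB u e).trans h.eu
  have hXe : B X e = 0 := (hB X e).trans h.eX
  have hXu : B X u = 0 := (hB X u).trans h.uX
  have hFeJe : F ![e, J e] = 0 := by
    have := hsym e e
    simp [heY, hbr, hue, hXe] at this
    linarith
  have hFuJu : F ![u, J u] = 0 := by
    have : F ![u, J u] = B u u / B e e * F ![e, J e] := by
      rw [hF u (J u), hF e (J e), hJ u e, hB u (J e), h.eu, hue]
      field_simp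
      ring
    rw [this, hFeJe, mul_zero]
  have hBYu : B Y u = 0 := by
    have := hsym e u
    rw [hF e (J u), hF u (J e), hJself, hJself, heY, huY, hbr] at this
    simpa [h.eu, hue, hXu, hXe, ha, huu] using this
  have hBYe : B Y e = 0 := by
    have := hsym u u
    rw [hFuJu, huY, hbr] at this
    simpa [hXu, ha, hee, huu] using this
  refine ⟨?_, hFeJe⟩
  conv_lhs => rw [hYc]
  rw [hBYu, hBYe]
  simp

theorem IsOrthoTriple.exists_apply_eq_smul [FiniteDimensional ℝ L] (h : IsOrthoTriple B e u X)
    (hB : ∀ x y, B x y = B y x) (hdim : finrank ℝ L = 3) {J : L →ₗ[ℝ] L}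
    (hJ : ∀ x y, B (J x) y = - B x (J y)) (hJX : J X = 0) (hJe : J (J e) = -e) :
    ∃ α : ℝ, α ≠ 0 ∧ J e = α • u ∧ B e e = α ^ 2 * B u u := by
  have hJee : B (J e) e = 0 := by linarith [hJ e e, hB e (J e)]
  have hJeX : B (J e) X = 0 := by rw [hJ, hJX, map_zero, neg_zero]
  have hJeu : J e = (B (J e) u / B u u) • u := by
    conv_lhs => rw [h.eq_coords hB hdim (J e)]
    simp [hJee, hJeX]
  refine ⟨B (J e) u / B u u, fun hα => h.ee ?_, hJeu, ?_⟩
  · have : e = 0 := by rw [← neg_neg e, ← hJe, hJeu, hα, zero_smul, map_zero, neg_zero]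
    simp [this]
  · have hnorm : B (J e) (J e) = B e e := by rw [hJ, hJe, map_neg, neg_neg]
    rw [← hnorm]
    conv_lhs => rw [hJeu]
    simp only [map_smul, LinearMap.smul_apply, smul_eq_mul]
    ring

theorem IsOrthoTriple.exists_basis_normal_form [FiniteDimensional ℝ L]
    (h : IsOrthoTriple B e u X) (hB : ∀ x y, B x y = B y x) (hdim : finrank ℝ L = 3)
    (hX : B X X = 1) (hu : B u u = 1 ∨ B u u = -1) (hcent : ∀ x : L, ⁅x, X⁆ = 0) {a α : ℝ}
    (ha : a ≠ 0) (hbr : ⁅e, u⁆ = a • u) (hα : α ≠ 0) (hee : B e e = α ^ 2 * B u u) :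
    ∃ (w : Module.Basis (Fin 3) ℝ L) (δ ε ε' : ℝ),
      δ ≠ 0 ∧ (ε = 1 ∨ ε = -1) ∧ (ε' = 1 ∨ ε' = -1) ∧
      (∀ i j, i ≠ j → B (w i) (w j) = 0) ∧
      ⁅w 0, w 1⁆ = w 1 ∧ ⁅w 0, w 2⁆ = 0 ∧ ⁅w 1, w 2⁆ = 0 ∧
      B (w 0) (w 0) = ε / δ ^ 2 ∧ B (w 1) (w 1) = ε' ∧ B (w 2) (w 2) = 1 ∧ w 2 = X := by
  have h' : IsOrthoTriple B (a⁻¹ • e) u X :=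
    ⟨by simp [h.eu], by simp [h.eX], h.uX, by simp [ha, h.ee], h.uu, h.XX⟩
  obtain ⟨w, hw⟩ := h'.exists_basis hB hdim
  refine ⟨w, a / α, B u u, B u u, div_ne_zero ha hα, hu, hu, fun i j hij => ?_, ?_, ?_, ?_, ?_,
    ?_, ?_, ?_⟩
  · fin_cases i <;> fin_cases j <;> simp_all [h.eu, h.eX, h.uX, hB u e, hB X e, hB X u]
  · simp [hw, hbr, smul_smul, ha]
  · simp [hw, hcent]
  · simp [hw, hcent]
  · simp [hw, hee]
    field_simp
  · simp [hw]
  · simp [hw, hX]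
  · simp [hw]

end LieAlgebra

theorem stmt_9 {𝔤 : Type*} [LieRing 𝔤] [LieAlgebra ℝ 𝔤] [FiniteDimensional ℝ 𝔤]
    (hdim : Module.finrank ℝ 𝔤 = 3)
    (hnonuni : ∃ x : 𝔤, LinearMap.trace ℝ 𝔤 (LieAlgebra.ad ℝ 𝔤 x) ≠ 0)
    (B : LinearMap.BilinForm ℝ 𝔤)
    (hBsymm : ∀ x y, B x y = B y x)
    (hBnd : ∀ x, (∀ y, B x y = 0) → x = 0)
    -- Levi-Civita product
    (N : 𝔤 → 𝔤 → 𝔤)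
    (hK : ∀ x y z, 2 * B (N x y) z = B ⁅x, y⁆ z - B ⁅y, z⁆ x + B ⁅z, x⁆ y)
    -- B₃-Kähler datum
    (Jp Jm : 𝔤 →ₗ[ℝ] 𝔤) (Xp Xm : 𝔤)
    (hJpskew : ∀ x y, B (Jp x) y = - B x (Jp y))
    (hJmskew : ∀ x y, B (Jm x) y = - B x (Jm y))
    (hXp : B Xp Xp = 1) (hXm : B Xm Xm = 1)
    (hJpXp : Jp Xp = 0) (hJmXm : Jm Xm = 0)
    (hJp2 : ∀ x, Jp (Jp x) = -x + B x Xp • Xp)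
    (hJm2 : ∀ x, Jm (Jm x) = -x + B x Xm • Xm)
    (H : AlternatingMap ℝ 𝔤 ℝ (Fin 3)) (F : AlternatingMap ℝ 𝔤 ℝ (Fin 2))
    (hFXm : ∀ y : 𝔤, F ![Xm, y] = 0)
    (Hs : 𝔤 → 𝔤 → 𝔤) (hHs : ∀ x y z, B (Hs x y) z = H ![x, y, z])
    (Fs : 𝔤 → 𝔤) (hFs : ∀ x y, B (Fs x) y = F ![x, y])
    (hNXm : ∀ x, N x Xm = (-(1 / 2 : ℝ)) • Hs x Xm)
    (hNXp : ∀ x, N x Xp = (-(1 / 2 : ℝ)) • Hs Xp x - Jp (Fs x)) :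
    H = 0 ∧ F = 0 ∧
    ∃ (w : Module.Basis (Fin 3) ℝ 𝔤) (δ ε ε' : ℝ),
      δ ≠ 0 ∧ (ε = 1 ∨ ε = -1) ∧ (ε' = 1 ∨ ε' = -1) ∧
      (∀ i j, i ≠ j → B (w i) (w j) = 0) ∧
      ⁅w 0, w 1⁆ = w 1 ∧ ⁅w 0, w 2⁆ = 0 ∧ ⁅w 1, w 2⁆ = 0 ∧
      B (w 0) (w 0) = ε / δ ^ 2 ∧ B (w 1) (w 1) = ε' ∧ B (w 2) (w 2) = 1 ∧
      Xm = w 2 ∧ (Xp = w 2 ∨ Xp = -w 2) := by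
  have hKm := koszul_eq_neg_of_nabla_eq hK hHs hNXm
  have hKp := koszul_eq_of_nabla_eq_sub hK hHs hFs hJpskew hNXp
  have hskew := lie_skew_of_koszul_eq_neg hKm
  obtain ⟨e, u, hT, hu, huu⟩ := exists_isOrthoTriple hdim (by rw [hXm]; exact one_ne_zero)
    (fun v hv hvX =>
      apply_self_ne_zero_of_skew_of_sq_eq hdim hBsymm hBnd hJmskew hXm hJmXm hJm2 hv hvX)
    ((LinearMap.trace ℝ 𝔤).comp (LieAlgebra.ad ℝ 𝔤 : 𝔤 →ₗ[ℝ] Module.End ℝ 𝔤))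
  obtain ⟨a, b, ha, hbr⟩ := exists_lie_eq_of_skew hdim hBsymm hT hskew hu hnonuni
  have hcent := lie_eq_zero_of_skew hdim hBsymm hT hskew ha hbr
  obtain ⟨hXpXm, hFeJe⟩ := eq_smul_of_koszul_eq hdim hBsymm hT hcent ha hbr hFXm hJpskew hKp
  obtain ⟨r, hr, rfl⟩ := exists_eq_sign_smul hXm hXp hXpXm
  have hr0 : r ≠ 0 := by rcases hr with rfl | rfl <;> norm_num
  have hJpXm : Jp Xm = 0 := (smul_eq_zero.mp (by rwa [map_smul] at hJpXp)).resolve_left hr0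
  obtain ⟨α, hα, hJe, hee⟩ :=
    hT.exists_apply_eq_smul hBsymm hdim hJpskew hJpXm (by simp [hJp2, hT.eX])
  have hF : F = 0 := hT.two_form_eq_zero hBsymm hdim hFXm hα (hJe ▸ hFeJe)
  have hHXm := apply_eq_zero_of_koszul_eq hr0 rfl hKm (by simpa [hF] using hKp)
  have hb : b = 0 := by
    simpa [hHXm, hbr, hT.uX, hXm] using (apply_eq_of_koszul_eq_neg hKm e u).symm
  have hH : H = 0 :=
    hT.alternating_eq_zero hBsymm hdim (by rw [H.map_vec3_swap12, hHXm, neg_zero])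
  obtain ⟨w, δ, ε, ε', hδ, hε, hε', hortho, h01, h02, h12, h00, h11, h22, hw2⟩ :=
    hT.exists_basis_normal_form hBsymm hdim hXm huu hcent ha (by simpa [hb] using hbr) hα hee
  refine ⟨hH, hF, w, δ, ε, ε', hδ, hε, hε', hortho, h01, h02, h12, h00, h11, h22, hw2.symm, ?_⟩
  rcases hr with rfl | rfl <;> simp [hw2]
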